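/- p-box disjunction: for every valuation ε, pGCL program s, pDL formulae φ₁, φ₂, and expectation lower bounds p₁, p₂, if ε ⊨ [s]_{p₁} φ₁ or ε ⊨ [s]_{p₂} φ₂, then ε ⊨ [s]_p (φ₁ ∨ φ₂), where p is defined pointwise by p = min(p₁, p₂). -/

import Mathlib

namespace PGCL

/-- Program valuations: maps from program variables to real values. -/
abbrev PVal : Type := String → ℝ

/-- Logical environments: maps from logical variables to their values.
    Logical variables are disjoint from program variables and cannot be
    accessed by programs. -/
abbrev LEnv : Type := String → ℝ

/-- Syntax of the probabilistic guarded command language pGCL.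
    Expressions are embedded shallowly as functions of the valuation. -/
inductive Stmt : Type
  | skip : Stmt
  | assign (x : String) (e : PVal → ℝ) : Stmt
  | seq (s₁ s₂ : Stmt) : Stmt
  /-- demonic (non-deterministic) choice `s₁ ⊓ s₂` -/
  | dem (s₁ s₂ : Stmt) : Stmt
  /-- probabilistic choice `s₁ [e] s₂` -/
  | prob (e : PVal → ℝ) (s₁ s₂ : Stmt) : Stmt
  | ifte (e : PVal → Bool) (s₁ s₂ : Stmt) : Stmt
  | whileLoop (e : PVal → Bool) (s : Stmt) : Stmt

/-- States of the MDP semantics: a valuation paired with the remaining program.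
    `(ε, Stmt.skip)` is final. -/
abbrev PState : Type := PVal × Stmt

/-- A positional policy resolves each demonic choice (true = left branch). -/
abbrev Policy : Type := PState → Bool

/-- One-step transition relation of the MDP semantics of pGCL, under policy `π`:
    `Step π σ p σ'` means σ steps to σ' with probability `p`. -/
inductive Step (π : Policy) : PState → ℝ → PState → Prop
  | assign {ε : PVal} {x : String} {e : PVal → ℝ} :
      Step π (ε, Stmt.assign x e) 1 (Function.update ε x (e ε), Stmt.skip)
  | seqSkip {ε ε' : PVal} {s₁ s₂ : Stmt} {p : ℝ} :
      Step π (ε, s₁) p (ε', s₂) → Step π (ε, Stmt.seq Stmt.skip s₁) p (ε', s₂)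
  | seqStep {ε ε' : PVal} {s₁ s₂ s : Stmt} {p : ℝ} :
      Step π (ε, s₁) p (ε', s₂) → Step π (ε, Stmt.seq s₁ s) p (ε', Stmt.seq s₂ s)
  | probL {ε : PVal} {e : PVal → ℝ} {s₁ s₂ : Stmt} :
      0 ≤ e ε → e ε ≤ 1 → Step π (ε, Stmt.prob e s₁ s₂) (e ε) (ε, s₁)
  | probR {ε : PVal} {e : PVal → ℝ} {s₁ s₂ : Stmt} :
      0 ≤ e ε → e ε ≤ 1 → Step π (ε, Stmt.prob e s₁ s₂) (1 - e ε) (ε, s₂)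
  | demL {ε : PVal} {s₁ s₂ : Stmt} :
      π (ε, Stmt.dem s₁ s₂) = true → Step π (ε, Stmt.dem s₁ s₂) 1 (ε, s₁)
  | demR {ε : PVal} {s₁ s₂ : Stmt} :
      π (ε, Stmt.dem s₁ s₂) = false → Step π (ε, Stmt.dem s₁ s₂) 1 (ε, s₂)
  | iteT {ε : PVal} {e : PVal → Bool} {s₁ s₂ : Stmt} :
      e ε = true → Step π (ε, Stmt.ifte e s₁ s₂) 1 (ε, s₁)
  | iteF {ε : PVal} {e : PVal → Bool} {s₁ s₂ : Stmt} :
      e ε = false → Step π (ε, Stmt.ifte e s₁ s₂) 1 (ε, s₂)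
  | whileT {ε : PVal} {e : PVal → Bool} {s : Stmt} :
      e ε = true →
        Step π (ε, Stmt.whileLoop e s) 1 (ε, Stmt.seq s (Stmt.whileLoop e s))
  | whileF {ε : PVal} {e : PVal → Bool} {s : Stmt} :
      e ε = false → Step π (ε, Stmt.whileLoop e s) 1 (ε, Stmt.skip)

/-- Finite paths under a policy `π` from a state to a final state. -/
inductive MPath (π : Policy) : PState → Type
  | nil (ε : PVal) : MPath π (ε, Stmt.skip)
  | cons {σ σ' : PState} (p : ℝ) (h : Step π σ p σ') (rest : MPath π σ') : MPath π σ

/-- The probability of a path: the product of its transition probabilities. -/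
noncomputable def MPath.prob {π : Policy} : {σ : PState} → MPath π σ → ℝ
  | _, .nil _ => 1
  | _, .cons p _ rest => p * rest.prob

/-- The valuation in the final state of a path. -/
def MPath.finalVal {π : Policy} : {σ : PState} → MPath π σ → PVal
  | _, .nil ε => ε
  | _, .cons _ _ rest => rest.finalVal

/-- Expected reward `E_{σ,π} r`: the sum over all paths from σ under π of the
    probability of the path times the reward of its final valuation. -/
noncomputable def expReward (π : Policy) (σ : PState) (r : PVal → ℝ) : ℝ :=
  ∑' ρ : MPath π σ, ρ.prob * r ρ.finalVal

/-- Expectation `𝔼_σ r`: infimum over all policies of the expected reward. -/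
noncomputable def expectation (σ : PState) (r : PVal → ℝ) : ℝ :=
  ⨅ π : Policy, expReward π σ r

open Classical in
/-- Characteristic (indicator) function of a proposition. -/
noncomputable def ind (P : Prop) : ℝ := if P then 1 else 0

/-- Formulae of probabilistic dynamic logic pDL. Atomic formulae are embedded
    shallowly as predicates over the program valuation and logical environment. -/
inductive Formula : Type
  | atom (A : PVal → LEnv → Prop) : Formula
  | neg (φ : Formula) : Formula
  | conj (φ₁ φ₂ : Formula) : Formula
  /-- universal quantification over the logical variable `l` (domain ℝ) -/
  | all (l : String) (φ : Formula) : Formula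
  /-- the p-box modality `[s]_p φ` -/
  | box (s : Stmt) (p : PVal → ℝ) (φ : Formula) : Formula

/-- Satisfaction `ε, η ⊨ φ` of pDL formulae. -/
def Sat : Formula → PVal → LEnv → Prop
  | .atom A, ε, η => A ε η
  | .neg φ, ε, η => ¬ Sat φ ε η
  | .conj φ₁ φ₂, ε, η => Sat φ₁ ε η ∧ Sat φ₂ ε η
  | .all l φ, ε, η => ∀ v : ℝ, Sat φ ε (Function.update η l v)
  | .box s p φ, ε, η => p ε ≤ expectation (ε, s) (fun ε' => ind (Sat φ ε' η))

/-- Disjunction `φ₁ ∨ φ₂ := ¬(¬φ₁ ∧ ¬φ₂)`. -/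
def Formula.disj (φ₁ φ₂ : Formula) : Formula := .neg (.conj (.neg φ₁) (.neg φ₂))

/-- Existential quantification `∃l·φ := ¬∀l·¬φ`. -/
def Formula.ex (l : String) (φ : Formula) : Formula := .neg (.all l (.neg φ))

/-- A program is purely probabilistic if it contains no demonic choice. -/
def DemFree : Stmt → Prop
  | .skip => True
  | .assign _ _ => True
  | .seq s₁ s₂ => DemFree s₁ ∧ DemFree s₂
  | .dem _ _ => False
  | .prob _ s₁ s₂ => DemFree s₁ ∧ DemFree s₂
  | .ifte _ s₁ s₂ => DemFree s₁ ∧ DemFree s₂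
  | .whileLoop _ s => DemFree s

end PGCL

open PGCL

namespace PGCL

lemma step_nonneg {π : Policy} {σ σ' : PState} {p : ℝ} (h : Step π σ p σ') : 0 ≤ p := by
  induction h with
  | probL h0 h1 => exact h0
  | probR h0 h1 => linarith
  | seqSkip _ ih => exact ih
  | seqStep _ ih => exact ih
  | _ => norm_num

lemma no_step_skip {π : Policy} {ε : PVal} {p : ℝ} {σ' : PState} :
    ¬ Step π (ε, Stmt.skip) p σ' := by
  intro h; cases h

open Classical in
noncomputable def succs (π : Policy) : PVal → Stmt → List (ℝ × PState)
  | _, .skip => []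
  | ε, .assign x e => [(1, (Function.update ε x (e ε), .skip))]
  | ε, .seq .skip s₂ => succs π ε s₂
  | ε, .seq s₁ s₂ => (succs π ε s₁).map (fun q => (q.1, (q.2.1, .seq q.2.2 s₂)))
  | ε, .dem s₁ s₂ => [(1, (ε, if π (ε, .dem s₁ s₂) then s₁ else s₂))]
  | ε, .prob e s₁ s₂ =>
      if 0 ≤ e ε ∧ e ε ≤ 1 then [(e ε, (ε, s₁)), (1 - e ε, (ε, s₂))] else []
  | ε, .ifte e s₁ s₂ => [(1, (ε, if e ε then s₁ else s₂))]
  | ε, .whileLoop e s => [(1, (ε, if e ε then .seq s (.whileLoop e s) else .skip))]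

lemma succs_seq {π : Policy} {ε : PVal} {s₁ s₂ : Stmt} (h : s₁ ≠ Stmt.skip) :
    succs π ε (.seq s₁ s₂) = (succs π ε s₁).map (fun q => (q.1, (q.2.1, .seq q.2.2 s₂))) := by
  cases s₁ <;> first | (exact absurd rfl h) | simp only [succs]

lemma mem_succs {π : Policy} {σ σ' : PState} {p : ℝ}
    (h : Step π σ p σ') : (p, σ') ∈ succs π σ.1 σ.2 := by
  induction h with
  | assign => simp [succs]
  | seqSkip _ ih => simpa [succs] using ih
  | @seqStep ε ε' s₁ s₂ s p hst ih =>
    have hne : s₁ ≠ Stmt.skip := by rintro rfl; exact no_step_skip hst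
    rw [succs_seq hne]
    exact List.mem_map.mpr ⟨(p, (ε', s₂)), ih, rfl⟩
  | probL h0 h1 => simp [succs, h0, h1]
  | probR h0 h1 => simp [succs, h0, h1]
  | demL hπ => simp [succs, hπ]
  | demR hπ => simp [succs, hπ]
  | iteT he => simp [succs, he]
  | iteF he => simp [succs, he]
  | whileT he => simp [succs, he]
  | whileF he => simp [succs, he]

lemma succs_nonneg (π : Policy) : ∀ (st : Stmt) (ε : PVal), ∀ x ∈ succs π ε st, (0:ℝ) ≤ x.1 := by
  intro st
  induction st with
  | skip => intro ε x hx; simp [succs] at hx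
  | assign y e => intro ε x hx; simp [succs] at hx; simp [hx]
  | seq s₁ s₂ ih₁ ih₂ =>
    intro ε x hx
    cases s₁ with
    | skip => exact ih₂ ε x (by simpa [succs] using hx)
    | _ =>
      rw [succs_seq (by simp), List.mem_map] at hx
      obtain ⟨q, hq, rfl⟩ := hx
      exact ih₁ ε q hq
  | dem s₁ s₂ ih₁ ih₂ => intro ε x hx; simp [succs] at hx; simp [hx]
  | prob e s₁ s₂ ih₁ ih₂ =>
    intro ε x hx
    by_cases hc : 0 ≤ e ε ∧ e ε ≤ 1 <;> simp [succs, hc] at hx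
    rcases hx with h | h <;> simp [h] <;> [exact hc.1; linarith [hc.2]]
  | ifte e s₁ s₂ ih₁ ih₂ => intro ε x hx; simp [succs] at hx; simp [hx]
  | whileLoop e s ih => intro ε x hx; simp [succs] at hx; simp [hx]

lemma succs_sum (π : Policy) : ∀ (st : Stmt) (ε : PVal),
    ((succs π ε st).map Prod.fst).sum ≤ 1 := by
  intro st
  induction st with
  | skip => intro ε; simp [succs]
  | assign y e => intro ε; simp [succs]
  | seq s₁ s₂ ih₁ ih₂ =>
    intro ε
    cases s₁ with
    | skip => simpa [succs] using ih₂ ε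
    | _ =>
      rw [succs_seq (by simp), List.map_map]
      simpa [Function.comp_def] using ih₁ ε
  | dem s₁ s₂ ih₁ ih₂ => intro ε; simp [succs]
  | prob e s₁ s₂ ih₁ ih₂ =>
    intro ε
    by_cases hc : 0 ≤ e ε ∧ e ε ≤ 1 <;> simp [succs, hc]
  | ifte e s₁ s₂ ih₁ ih₂ => intro ε; simp [succs]
  | whileLoop e s ih => intro ε; simp [succs]

lemma finset_sum_le_list {α : Type*} (f : α → ℝ) :
    ∀ (l : List α) (S : Finset α), (∀ x ∈ l, 0 ≤ f x) → (∀ x ∈ S, x ∈ l) →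
      ∑ x ∈ S, f x ≤ (l.map f).sum := by
  intro l
  induction l with
  | nil =>
    intro S _ hS
    have : S = ∅ := Finset.eq_empty_of_forall_notMem (fun x hx => by simpa using hS x hx)
    simp [this]
  | cons a t ih =>
    intro S h0 hS
    classical
    have h0t : ∀ x ∈ t, 0 ≤ f x := fun x hx => h0 x (List.mem_cons_of_mem a hx)
    by_cases ha : a ∈ S
    · have hsum : ∑ x ∈ S, f x = f a + ∑ x ∈ S.erase a, f x := (Finset.add_sum_erase _ f ha).symm
      rw [hsum, List.map_cons, List.sum_cons]
      have := ih (S.erase a) h0t (fun x hx => by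
        rcases List.mem_cons.mp (hS x (Finset.mem_of_mem_erase hx)) with h | h
        · exact absurd h (Finset.ne_of_mem_erase hx)
        · exact h)
      linarith
    · rw [List.map_cons, List.sum_cons]
      have := ih S h0t (fun x hx => by
        rcases List.mem_cons.mp (hS x hx) with h | h
        · exact absurd (h ▸ hx) ha
        · exact h)
      have hfa : 0 ≤ f a := h0 a List.mem_cons_self
      linarith

lemma one_step_sum {π : Policy} (σ : PState) (S : Finset (ℝ × PState))
    (hS : ∀ x ∈ S, Step π σ x.1 x.2) : ∑ x ∈ S, x.1 ≤ 1 := by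
  calc ∑ x ∈ S, x.1 ≤ ((succs π σ.1 σ.2).map Prod.fst).sum :=
        finset_sum_le_list Prod.fst _ S (fun x hx => succs_nonneg π σ.2 σ.1 x hx)
          (fun x hx => mem_succs (hS x hx))
    _ ≤ 1 := succs_sum π σ.2 σ.1

instance : Inhabited Stmt := ⟨.skip⟩

def Valid (π : Policy) : PState → List (ℝ × PState) → Prop
  | σ, [] => σ.2 = Stmt.skip
  | σ, x :: l => Step π σ x.1 x.2 ∧ Valid π x.2 l

noncomputable def w (l : List (ℝ × PState)) : ℝ := (l.map Prod.fst).prod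

lemma w_nil : w [] = 1 := by simp [w]

lemma w_cons (x : ℝ × PState) (l : List (ℝ × PState)) : w (x :: l) = x.1 * w l := by
  simp [w]

lemma key_sum (π : Policy) : ∀ (n : ℕ) (σ : PState) (L : Finset (List (ℝ × PState))),
    (∀ l ∈ L, Valid π σ l ∧ l.length ≤ n) → ∑ l ∈ L, w l ≤ 1 := by
  intro n
  induction n with
  | zero =>
    intro σ L hL
    have hsub : L ⊆ {[]} := by
      intro l hl
      have h0 : l = [] := List.length_eq_zero_iff.mp (Nat.le_zero.mp (hL l hl).2)
      simp [h0]
    rcases Finset.subset_singleton_iff.mp hsub with h | h <;> simp [h, w_nil]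
  | succ n ih =>
    intro σ L hL
    classical
    by_cases hnil : [] ∈ L
    · have hskip : σ.2 = Stmt.skip := (hL [] hnil).1
      have hLs : L = {[]} := by
        apply Finset.eq_singleton_iff_unique_mem.mpr
        refine ⟨hnil, fun l hl => ?_⟩
        rcases l with _ | ⟨x, t⟩
        · rfl
        · have hstep := (hL _ hl).1.1
          obtain ⟨ε, st⟩ := σ
          simp only at hskip
          subst hskip
          exact absurd hstep no_step_skip
      simp [hLs, w_nil]
    · have hne : ∀ l ∈ L, l ≠ [] := fun l hl h => hnil (h ▸ hl)
      have hfib : ∀ x, ∀ l ∈ L.filter (fun l => l.headI = x), l = x :: l.tail := by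
        intro x l hl
        rw [Finset.mem_filter] at hl
        obtain ⟨b, t, rfl⟩ := List.exists_cons_of_ne_nil (hne l hl.1)
        have hb : b = x := by simpa using hl.2
        simp [hb]
      have hstepall : ∀ x ∈ L.image (fun l => l.headI), Step π σ x.1 x.2 := by
        intro x hx
        obtain ⟨l₀, hl₀, hgl₀⟩ := Finset.mem_image.mp hx
        obtain ⟨b, t, rfl⟩ := List.exists_cons_of_ne_nil (hne l₀ hl₀)
        have hb : b = x := by simpa using hgl₀
        subst hb
        exact (hL _ hl₀).1.1
      have hmaps : ∀ l ∈ L, l.headI ∈ L.image (fun l => l.headI) :=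
        fun l hl => Finset.mem_image_of_mem _ hl
      rw [← Finset.sum_fiberwise_of_maps_to hmaps w]
      have hx : ∀ x ∈ L.image (fun l => l.headI),
          ∑ l ∈ L.filter (fun l => l.headI = x), w l ≤ x.1 := by
        intro x hxmem
        have hinj : ∀ a ∈ L.filter (fun l => l.headI = x), ∀ b ∈ L.filter (fun l => l.headI = x),
            a.tail = b.tail → a = b := by
          intro a ha b hb htl
          rw [hfib x a ha, hfib x b hb, htl]
        have hsum : ∑ l ∈ L.filter (fun l => l.headI = x), w l
            = x.1 * ∑ t ∈ (L.filter (fun l => l.headI = x)).image List.tail, w t := by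
          rw [Finset.sum_image hinj, Finset.mul_sum]
          refine Finset.sum_congr rfl (fun l hl => ?_)
          conv_lhs => rw [hfib x l hl]
          rw [w_cons]
        rw [hsum]
        have htb : ∑ t ∈ (L.filter (fun l => l.headI = x)).image List.tail, w t ≤ 1 := by
          refine ih x.2 _ (fun t ht => ?_)
          obtain ⟨l, hl, rfl⟩ := Finset.mem_image.mp ht
          have hlx := hfib x l hl
          rw [Finset.mem_filter] at hl
          have hv := (hL l hl.1).1
          have hlen := (hL l hl.1).2
          rw [hlx] at hv hlen
          exact ⟨hv.2, by simpa using Nat.lt_succ_iff.mp (by simpa [Nat.lt_succ_iff] using hlen)⟩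
        calc x.1 * _ ≤ x.1 * 1 :=
              mul_le_mul_of_nonneg_left htb (step_nonneg (hstepall x hxmem))
          _ = x.1 := mul_one _
      calc ∑ x ∈ L.image (fun l => l.headI), ∑ l ∈ L.filter (fun l => l.headI = x), w l
            ≤ ∑ x ∈ L.image (fun l => l.headI), x.1 := Finset.sum_le_sum hx
        _ ≤ 1 := one_step_sum σ _ hstepall

def MPath.toList {π : Policy} : {σ : PState} → MPath π σ → List (ℝ × PState)
  | _, .nil _ => []
  | _, .cons (σ' := σ') p _ rest => (p, σ') :: rest.toList

lemma toList_valid {π : Policy} : ∀ {σ : PState} (ρ : MPath π σ), Valid π σ ρ.toList := by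
  intro σ ρ
  induction ρ with
  | nil ε => simp [MPath.toList, Valid]
  | cons p h rest ih => exact ⟨h, ih⟩

lemma w_toList {π : Policy} : ∀ {σ : PState} (ρ : MPath π σ), w ρ.toList = ρ.prob := by
  intro σ ρ
  induction ρ with
  | nil ε => simp [MPath.toList, MPath.prob, w_nil]
  | cons p h rest ih => simp [MPath.toList, MPath.prob, w_cons, ih]

lemma toList_inj {π : Policy} : ∀ {σ : PState} (ρ ρ' : MPath π σ),
    ρ.toList = ρ'.toList → ρ = ρ' := by
  intro σ ρ
  induction ρ with
  | nil ε =>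
    intro ρ' hh
    cases ρ' with
    | nil => rfl
    | cons p h rest => simp [MPath.toList] at hh
  | cons p h rest ih =>
    intro ρ' hh
    cases ρ' with
    | nil => simp [MPath.toList] at hh
    | cons p' h' rest' =>
      simp only [MPath.toList, List.cons.injEq, Prod.mk.injEq] at hh
      obtain ⟨⟨hp, hσ⟩, ht⟩ := hh
      subst hp
      subst hσ
      rw [ih rest' ht]

lemma prob_nonneg {π : Policy} {σ : PState} (ρ : MPath π σ) : 0 ≤ ρ.prob := by
  induction ρ with
  | nil ε => norm_num [MPath.prob]
  | cons p h rest ih => exact mul_nonneg (step_nonneg h) ih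

lemma sum_prob_le_one (π : Policy) (σ : PState) (G : Finset (MPath π σ)) :
    ∑ ρ ∈ G, ρ.prob ≤ 1 := by
  classical
  have hinj : ∀ a ∈ G, ∀ b ∈ G, a.toList = b.toList → a = b :=
    fun a _ b _ h => toList_inj a b h
  have h1 : ∑ ρ ∈ G, ρ.prob = ∑ l ∈ G.image MPath.toList, w l := by
    rw [Finset.sum_image hinj]
    exact Finset.sum_congr rfl (fun ρ _ => (w_toList ρ).symm)
  rw [h1]
  refine key_sum π ((G.image MPath.toList).sup List.length) σ _ (fun l hl => ?_)
  obtain ⟨ρ, hρ, rfl⟩ := Finset.mem_image.mp hl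
  exact ⟨toList_valid ρ, Finset.le_sup hl⟩

lemma summable_prob (π : Policy) (σ : PState) :
    Summable (fun ρ : MPath π σ => ρ.prob) :=
  summable_of_sum_le (fun ρ => prob_nonneg ρ) (sum_prob_le_one π σ)

lemma summable_reward (π : Policy) (σ : PState) {r : PVal → ℝ}
    (h0 : ∀ v, 0 ≤ r v) (h1 : ∀ v, r v ≤ 1) :
    Summable (fun ρ : MPath π σ => ρ.prob * r ρ.finalVal) :=
  Summable.of_nonneg_of_le (fun ρ => mul_nonneg (prob_nonneg ρ) (h0 _))
    (fun ρ => mul_le_of_le_one_right (prob_nonneg ρ) (h1 _))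
    (summable_prob π σ)

lemma ind_nonneg (P : Prop) : 0 ≤ ind P := by unfold ind; split <;> norm_num

lemma ind_le_one (P : Prop) : ind P ≤ 1 := by unfold ind; split <;> norm_num

lemma ind_mono {P Q : Prop} (h : P → Q) : ind P ≤ ind Q := by
  unfold ind
  by_cases hp : P
  · simp [hp, h hp]
  · simp only [hp, if_false]
    split <;> norm_num

lemma expectation_mono (σ : PState) {r₁ r₂ : PVal → ℝ}
    (h10 : ∀ v, 0 ≤ r₁ v) (h11 : ∀ v, r₁ v ≤ 1)
    (h20 : ∀ v, 0 ≤ r₂ v) (h21 : ∀ v, r₂ v ≤ 1)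
    (hle : ∀ v, r₁ v ≤ r₂ v) :
    expectation σ r₁ ≤ expectation σ r₂ := by
  apply ciInf_mono
  · refine ⟨0, ?_⟩
    rintro y ⟨π, rfl⟩
    exact tsum_nonneg (fun ρ => mul_nonneg (prob_nonneg ρ) (h10 _))
  · intro π
    exact Summable.tsum_le_tsum (fun ρ => mul_le_mul_of_nonneg_left (hle _) (prob_nonneg ρ))
      (summable_reward π σ h10 h11) (summable_reward π σ h20 h21)

end PGCL


/-- p-box disjunction. -/
theorem pbox_disjunction (ε : PVal) (η : LEnv) (s : Stmt) (φ₁ φ₂ : Formula)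
    (p₁ p₂ : PVal → ℝ)
    (hp₁ : ∀ ε', p₁ ε' ∈ Set.Icc (0 : ℝ) 1) (hp₂ : ∀ ε', p₂ ε' ∈ Set.Icc (0 : ℝ) 1)
    (h : Sat (.box s p₁ φ₁) ε η ∨ Sat (.box s p₂ φ₂) ε η) :
    Sat (.box s (fun ε' => min (p₁ ε') (p₂ ε')) (Formula.disj φ₁ φ₂)) ε η := by
  have hd : ∀ v : PVal, (Sat φ₁ v η ∨ Sat φ₂ v η) → Sat (Formula.disj φ₁ φ₂) v η := by
    intro v hv
    simp only [Formula.disj, Sat]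
    tauto
  simp only [Sat] at h ⊢
  have hmono : ∀ (φ : Formula), (∀ v, Sat φ v η → Sat φ₁ v η ∨ Sat φ₂ v η) →
      expectation (ε, s) (fun ε' => ind (Sat φ ε' η)) ≤
      expectation (ε, s) (fun ε' => ind (Sat (Formula.disj φ₁ φ₂) ε' η)) :=
    fun φ himp => expectation_mono _ (fun v => ind_nonneg _) (fun v => ind_le_one _)
      (fun v => ind_nonneg _) (fun v => ind_le_one _)
      (fun v => ind_mono (fun hs => hd v (himp v hs)))
  rcases h with h | h
  · exact le_trans (min_le_left _ _) (le_trans h (hmono φ₁ (fun v => Or.inl)))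
  · exact le_trans (min_le_right _ _) (le_trans h (hmono φ₂ (fun v => Or.inr)))
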